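/- Let k ≥ 2 be an integer and c > 1 a non-integer, and suppose hypothesis (PSW) holds with constant 0 < P(c,k) ≤ 1/(ck). Let ω be a real number and C₀ ≥ 1. Then there is a constant C (depending on C₀) such that uniformly for α ∈ [0,1) and all x ≥ 2: | ∑_{x/C₀ ≤ n ≤ x} n^{ω−1/(ck)} 1_{N_(c)^k}(n) e(nα) − (1/c) ∑_{x/C₀ ≤ n ≤ x} n^{ω−1/k} 1_{N^k}(n) e(nα) | ≤ C·x^{ω − P(c,k)}. -/

import Mathlib

open MeasureTheory Filter Finset Set

noncomputable section

/-- `e(α) = exp(2πiα)`. -/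
def eR (α : ℝ) : ℂ := Complex.exp (2 * Real.pi * Complex.I * α)

/-- The Piatetski-Shapiro set `N_(c) = {⌊n^c⌋ : n ∈ ℕ, n ≥ 1}`. -/
def NPS (c : ℝ) : Set ℕ := {m | ∃ n : ℕ, 1 ≤ n ∧ m = ⌊(n : ℝ) ^ c⌋₊}

/-- `H₀(c)` for non-integral real `c > 1`. -/
def H0c (c : ℝ) : ℝ :=
  if c < 2 then 2 else ((⌊2 * c⌋ : ℝ) + 1) * ((⌊2 * c⌋ : ℝ) + 2) / 2

/-- `H₀(k)` for a positive integer `k`. -/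
def H0k (k : ℕ) : ℕ :=
  if k ≤ 4 then 2 ^ (k - 1) else k * (k - 1) / 2 + Nat.sqrt (2 * k + 2)

/-- `k`-th powers of positive integers. -/
def Npow (k : ℕ) : Set ℕ := {m | ∃ n : ℕ, 1 ≤ n ∧ m = n ^ k}

/-- `k`-th powers of Piatetski-Shapiro numbers. -/
def NPSpow (c : ℝ) (k : ℕ) : Set ℕ := {m | ∃ n ∈ NPS c, m = n ^ k}

/-- `k`-th powers of primes. -/
def Ppow (k : ℕ) : Set ℕ := {m | ∃ p : ℕ, p.Prime ∧ m = p ^ k}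

/-- `k`-th powers of Piatetski-Shapiro primes. -/
def PPSpow (c : ℝ) (k : ℕ) : Set ℕ := {m | ∃ p ∈ NPS c, p.Prime ∧ m = p ^ k}

/-- The representation function `r_{A,h}(n)`: the number of ordered `h`-tuples
from `A` summing to `n`. -/
def rep (A : Set ℕ) (h n : ℕ) : ℕ :=
  Nat.card {x : Fin h → ℕ // (∀ i, x i ∈ A) ∧ ∑ i, x i = n}

open scoped Classical in
/-- The finite set of ordered `h`-tuples of elements of `A` summing to `N`. -/
def tuples (A : Set ℕ) (h N : ℕ) : Finset (Fin h → ℕ) :=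
  (Fintype.piFinset fun _ : Fin h => Finset.range (N + 1)).filter
    (fun x => (∀ i, x i ∈ A) ∧ ∑ i, x i = N)

/-- Weighted exponential sum `∑_{1 ≤ n ≤ x, n ∈ A} w(n) e(nα)`. -/
def expSum (A : Set ℕ) (w : ℕ → ℝ) (α x : ℝ) : ℂ :=
  ∑ n ∈ Finset.Icc 1 ⌊x⌋₊, ((Set.indicator A w n : ℝ) : ℂ) * eR (n * α)

/-- Weighted exponential sum `∑_{y ≤ n ≤ x, n ∈ A} w(n) e(nα)`. -/
def expSumI (A : Set ℕ) (w : ℕ → ℝ) (α y x : ℝ) : ℂ :=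
  ∑ n ∈ Finset.Icc ⌈y⌉₊ ⌊x⌋₊, ((Set.indicator A w n : ℝ) : ℂ) * eR (n * α)

/-- Distance to the nearest integer. -/
def distInt (α : ℝ) : ℝ := |α - (round α : ℝ)|

/-- The major arc `𝔐 = {α ∈ [0,1] : ‖α‖ ≤ N^ν / N}`. -/
def MajorArc (ν : ℝ) (N : ℕ) : Set ℝ :=
  {α ∈ Set.Icc (0:ℝ) 1 | distInt α ≤ (N : ℝ) ^ ν / N}

/-- The minor arc `𝔪 = [0,1] ∖ 𝔐`. -/
def MinorArc (ν : ℝ) (N : ℕ) : Set ℝ := Set.Icc (0:ℝ) 1 \ MajorArc ν N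

/-- `T(α;x) = ∑_{n≤x} n^{ω-1/c} 1_{N_(c)}(n) e(nα)`. -/
def Tc (c ω : ℝ) (α x : ℝ) : ℂ := expSum (NPS c) (fun n => (n : ℝ) ^ (ω - 1 / c)) α x

/-- `T^♯(α;x) = ∑_{x/h≤n≤x} n^{ω-1/c} 1_{N_(c)}(n) e(nα)`. -/
def TcSharp (c ω : ℝ) (h : ℕ) (α x : ℝ) : ℂ :=
  expSumI (NPS c) (fun n => (n : ℝ) ^ (ω - 1 / c)) α (x / h) x

/-- `U(α;x) = ∑_{n≤x} n^{ω-1} e(nα)`. -/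
def Uc (ω : ℝ) (α x : ℝ) : ℂ :=
  ∑ n ∈ Finset.Icc 1 ⌊x⌋₊, (((n : ℝ) ^ (ω - 1) : ℝ) : ℂ) * eR (n * α)

/-- `U^♯(α;x) = ∑_{x/h≤n≤x} n^{ω-1} e(nα)`. -/
def UcSharp (ω : ℝ) (h : ℕ) (α x : ℝ) : ℂ :=
  ∑ n ∈ Finset.Icc ⌈x / h⌉₊ ⌊x⌋₊, (((n : ℝ) ^ (ω - 1) : ℝ) : ℂ) * eR (n * α)

/-- The complete Gauss-type sum `S(a,q) = ∑_{r=1}^q e(a r^k / q)`. -/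
def Swar (k a q : ℕ) : ℂ := ∑ r ∈ Finset.Icc 1 q, eR (((a * r ^ k : ℕ) : ℝ) / q)

/-- The singular series of Waring's problem. -/
def SingSer (k h n : ℕ) : ℝ :=
  (∑' q : ℕ, ∑ a ∈ (Finset.Icc 1 q).filter (fun a => Nat.gcd a q = 1),
      (Swar k a q / (q : ℂ)) ^ h * eR (-(((n * a : ℕ) : ℝ) / q))).re

/-- The restricted Gauss-type sum `S*(q,a) = ∑_{1≤r≤q, (r,q)=1} e(a r^k / q)`. -/
def SwarStar (k a q : ℕ) : ℂ :=
  ∑ r ∈ (Finset.Icc 1 q).filter (fun r => Nat.gcd r q = 1), eR (((a * r ^ k : ℕ) : ℝ) / q)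

/-- The singular series of the Waring–Goldbach problem. -/
def SingSerStar (k h n : ℕ) : ℝ :=
  (∑' q : ℕ, ∑ a ∈ (Finset.Icc 1 q).filter (fun a => Nat.gcd a q = 1),
      (SwarStar k a q / (Nat.totient q : ℂ)) ^ h * eR (-(((n * a : ℕ) : ℝ) / q))).re

/-- `K(k) = ∏_{(p-1) ∣ k} p^{ν(k,p)}`. -/
def Kk (k : ℕ) : ℕ :=
  ∏ p ∈ (Finset.range (k + 2)).filter (fun p => p.Prime ∧ (p - 1) ∣ k),
    p ^ (k.factorization p + if p = 2 ∧ 2 ∣ k then 2 else 1)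

/-- A measurable positive function is regularly varying if `F(λx)/F(x)` converges
to a positive limit for every `λ > 0`. -/
def RegularlyVarying (F : ℝ → ℝ) : Prop :=
  Measurable F ∧ ∀ l : ℝ, 0 < l → ∃ L : ℝ, 0 < L ∧
    Filter.Tendsto (fun x => F (l * x) / F x) Filter.atTop (nhds L)

/-- Hypothesis (PSW). -/
def PSW (c : ℝ) (k : ℕ) (P : ℝ) : Prop :=
  ∃ C : ℝ, ∀ α ∈ Set.Ico (0:ℝ) 1, ∀ x : ℝ, 2 ≤ x →
    ‖(expSum (NPSpow c k) (fun _ => 1) α x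
      - (1 / c) * expSum (Npow k) (fun n => (n : ℝ) ^ ((1 / c - 1) / k)) α x)‖
      ≤ C * x ^ (1 / (c * k) - P)

/-- Hypothesis (PSWG). -/
def PSWG (c : ℝ) (k : ℕ) (P : ℝ) : Prop :=
  ∃ C : ℝ, ∀ α ∈ Set.Ico (0:ℝ) 1, ∀ x : ℝ, 2 ≤ x →
    ‖(expSum (PPSpow c k) (fun n => Real.log n) α x
      - (1 / c) * expSum (Ppow k) (fun n => (n : ℝ) ^ ((1 / c - 1) / k) * Real.log n) α x)‖
      ≤ C * x ^ (1 / (c * k) - P)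

/-!
Let `D(t)` be the error term of (PSW) at `t` and `θ = ω - 1/(ck)`. Since
`n^(ω - 1/k) = n^θ · n^((1/c - 1)/k)`, the `n`-th term of the difference to be bounded is
`n^θ (D(n) - D(n-1))`. The weight `n ↦ n^θ` is monotone and of size at most `C₀^|θ| x^θ` on
`x/C₀ ≤ n ≤ x`, so partial summation bounds the sum by `4 C₀^|θ| x^θ · max_{t ≤ x} |D(t)|`.
For `t ≥ 2`, (PSW) gives `|D(t)| ≪ t^(1/(ck) - P) ≤ x^(1/(ck) - P)`; as this exponent is
nonnegative, the same bound also covers `t ≤ 1`.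
-/
theorem norm_eR (t : ℝ) : ‖eR t‖ = 1 := by
  simp [eR, Complex.norm_exp]

section SummationByParts

variable {R E : Type*}

theorem sum_Icc_smul_sub_eq [Ring R] [AddCommGroup E] [Module R E] (g : ℕ → R) (D : ℕ → E)
    {M N : ℕ} (hMN : M ≤ N) :
    ∑ n ∈ Finset.Icc M N, g n • (D n - D (n - 1)) =
      g N • D N - g M • D (M - 1) - ∑ n ∈ Finset.Ico M N, (g (n + 1) - g n) • D n := by
  induction N, hMN using Nat.le_induction with
  | base => simp [smul_sub]
  | succ N hMN ih =>
    rw [Finset.sum_Icc_succ_top (by omega), ih, Finset.sum_Ico_succ_top hMN,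
      Nat.add_sub_cancel, sub_smul, smul_sub]
    abel

theorem sum_Ico_abs_sub_eq {g : ℕ → ℝ} {M N : ℕ} (hMN : M ≤ N)
    (hg : MonotoneOn g (Set.Icc M N) ∨ AntitoneOn g (Set.Icc M N)) :
    ∑ n ∈ Finset.Ico M N, |g (n + 1) - g n| = |g N - g M| := by
  have step : ∀ n ∈ Finset.Ico M N, n ∈ Set.Icc M N ∧ n + 1 ∈ Set.Icc M N := fun n hn => by
    simp only [Finset.mem_Ico] at hn
    exact ⟨⟨hn.1, hn.2.le⟩, ⟨by omega, hn.2⟩⟩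
  rcases hg with hg | hg
  · rw [abs_of_nonneg (sub_nonneg.2 (hg ⟨le_rfl, hMN⟩ ⟨hMN, le_rfl⟩ hMN)),
      ← Finset.sum_Ico_sub g hMN]
    refine Finset.sum_congr rfl fun n hn => abs_of_nonneg (sub_nonneg.2 ?_)
    exact hg (step n hn).1 (step n hn).2 n.le_succ
  · rw [abs_of_nonpos (sub_nonpos.2 (hg ⟨le_rfl, hMN⟩ ⟨hMN, le_rfl⟩ hMN)),
      ← Finset.sum_Ico_sub g hMN, ← Finset.sum_neg_distrib]
    refine Finset.sum_congr rfl fun n hn => abs_of_nonpos (sub_nonpos.2 ?_)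
    exact hg (step n hn).1 (step n hn).2 n.le_succ

theorem norm_sum_Icc_smul_sub_le [NormedAddCommGroup E] [NormedSpace ℝ E]
    {g : ℕ → ℝ} {D : ℕ → E} {M N : ℕ} {G B : ℝ} (hMN : M ≤ N)
    (hg : MonotoneOn g (Set.Icc M N) ∨ AntitoneOn g (Set.Icc M N))
    (hgG : ∀ n ∈ Finset.Icc M N, |g n| ≤ G) (hDB : ∀ n ∈ Finset.Icc (M - 1) N, ‖D n‖ ≤ B) :
    ‖∑ n ∈ Finset.Icc M N, g n • (D n - D (n - 1))‖ ≤ 4 * G * B := by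
  have hM : M ∈ Finset.Icc M N := Finset.mem_Icc.2 ⟨le_rfl, hMN⟩
  have hN : N ∈ Finset.Icc M N := Finset.mem_Icc.2 ⟨hMN, le_rfl⟩
  have hB : 0 ≤ B := (norm_nonneg _).trans (hDB N (Finset.mem_Icc.2 ⟨by omega, le_rfl⟩))
  have hDB' : ∀ n ∈ Finset.Ico M N, ‖D n‖ ≤ B := fun n hn => by
    simp only [Finset.mem_Ico] at hn
    exact hDB n (Finset.mem_Icc.2 ⟨by omega, hn.2.le⟩)
  have hvar : ‖∑ n ∈ Finset.Ico M N, (g (n + 1) - g n) • D n‖ ≤ |g N - g M| * B :=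
    calc ‖∑ n ∈ Finset.Ico M N, (g (n + 1) - g n) • D n‖
        ≤ ∑ n ∈ Finset.Ico M N, |g (n + 1) - g n| * B := by
          refine (norm_sum_le _ _).trans (Finset.sum_le_sum fun n hn => ?_)
          rw [norm_smul, Real.norm_eq_abs]
          exact mul_le_mul_of_nonneg_left (hDB' n hn) (abs_nonneg _)
      _ = |g N - g M| * B := by rw [← Finset.sum_mul, sum_Ico_abs_sub_eq hMN hg]
  have hN' : ‖g N • D N‖ ≤ |g N| * B := by
    rw [norm_smul, Real.norm_eq_abs]
    exact mul_le_mul_of_nonneg_left (hDB N (Finset.mem_Icc.2 ⟨by omega, le_rfl⟩)) (abs_nonneg _)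
  have hM' : ‖g M • D (M - 1)‖ ≤ |g M| * B := by
    rw [norm_smul, Real.norm_eq_abs]
    exact mul_le_mul_of_nonneg_left (hDB _ (Finset.mem_Icc.2 ⟨le_rfl, by omega⟩)) (abs_nonneg _)
  have hdiff : |g N - g M| ≤ 2 * G := by
    linarith [abs_sub (g N) (g M), hgG N hN, hgG M hM]
  rw [sum_Icc_smul_sub_eq g D hMN]
  calc _ ≤ |g N| * B + |g M| * B + |g N - g M| * B :=
        (norm_sub_le_of_le (norm_sub_le_of_le hN' hM') hvar)
    _ ≤ 4 * G * B := by nlinarith [hgG N hN, hgG M hM]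

end SummationByParts

theorem rpow_le_rpow_abs_mul_rpow {x y C θ : ℝ} (hx : 0 < x) (hC : 1 ≤ C)
    (hxy : x / C ≤ y) (hyx : y ≤ x) : y ^ θ ≤ C ^ |θ| * x ^ θ := by
  have hy : 0 < y := (div_pos hx (by linarith)).trans_le hxy
  rcases le_or_gt 0 θ with hθ | hθ
  · calc y ^ θ ≤ x ^ θ := Real.rpow_le_rpow hy.le hyx hθ
      _ ≤ C ^ |θ| * x ^ θ :=
        le_mul_of_one_le_left (by positivity) (Real.one_le_rpow hC (abs_nonneg θ))
  · calc y ^ θ ≤ (x / C) ^ θ := Real.rpow_le_rpow_of_nonpos (by positivity) hxy hθ.le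
      _ = C ^ |θ| * x ^ θ := by
        rw [Real.div_rpow hx.le (by linarith), abs_of_neg hθ, Real.rpow_neg (by linarith),
          div_eq_mul_inv, mul_comm]

theorem monotoneOn_or_antitoneOn_natCast_rpow (θ : ℝ) {M : ℕ} (hM : 1 ≤ M) (N : ℕ) :
    MonotoneOn (fun n : ℕ => (n : ℝ) ^ θ) (Set.Icc M N) ∨
      AntitoneOn (fun n : ℕ => (n : ℝ) ^ θ) (Set.Icc M N) := by
  rcases le_or_gt 0 θ with hθ | hθ
  · exact Or.inl fun m _ n _ hmn =>
      Real.rpow_le_rpow (Nat.cast_nonneg m) (by exact_mod_cast hmn) hθ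
  · refine Or.inr fun m hm n _ hmn => Real.rpow_le_rpow_of_nonpos ?_ (by exact_mod_cast hmn) hθ.le
    exact Nat.cast_pos.2 (hM.trans hm.1)

theorem expSum_natCast_sub_expSum_pred (A : Set ℕ) (w : ℕ → ℝ) (α : ℝ) {n : ℕ} (hn : 1 ≤ n) :
    expSum A w α n - expSum A w α ↑(n - 1) = ((A.indicator w n : ℝ) : ℂ) * eR (n * α) := by
  obtain ⟨m, rfl⟩ : ∃ m, n = m + 1 := ⟨n - 1, by omega⟩
  simp only [expSum, Nat.floor_natCast, Nat.add_sub_cancel,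
    Finset.sum_Icc_succ_top (by omega : 1 ≤ m + 1), add_sub_cancel_left]

def pswError (c : ℝ) (k : ℕ) (α x : ℝ) : ℂ :=
  expSum (NPSpow c k) (fun _ => 1) α x
    - (1 / c) * expSum (Npow k) (fun n => (n : ℝ) ^ ((1 / c - 1) / k)) α x

theorem pswError_zero (c : ℝ) (k : ℕ) (α : ℝ) : pswError c k α 0 = 0 := by
  simp [pswError, expSum]

theorem pswError_natCast_sub_pred (c : ℝ) (k : ℕ) (α : ℝ) {n : ℕ} (hn : 1 ≤ n) :
    pswError c k α n - pswError c k α ↑(n - 1) =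
      (((NPSpow c k).indicator (fun _ => 1) n : ℝ) : ℂ) * eR (n * α)
        - (1 / c) * ((((Npow k).indicator (fun n => (n : ℝ) ^ ((1 / c - 1) / k)) n : ℝ) : ℂ)
          * eR (n * α)) := by
  rw [← expSum_natCast_sub_expSum_pred _ _ α hn, ← expSum_natCast_sub_expSum_pred _ _ α hn,
    pswError, pswError]
  ring

theorem expSumI_sub_eq_sum_smul_pswError_sub (c : ℝ) (k : ℕ) (ω α : ℝ) {y : ℝ} (hy : 0 < y)
    (x : ℝ) :
    expSumI (NPSpow c k) (fun n => (n : ℝ) ^ (ω - 1 / (c * k))) α y x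
        - (1 / c) * expSumI (Npow k) (fun n => (n : ℝ) ^ (ω - 1 / k)) α y x
      = ∑ n ∈ Finset.Icc ⌈y⌉₊ ⌊x⌋₊,
          (n : ℝ) ^ (ω - 1 / (c * k)) • (pswError c k α n - pswError c k α ↑(n - 1)) := by
  simp only [expSumI, Finset.mul_sum, ← Finset.sum_sub_distrib]
  refine Finset.sum_congr rfl fun n hn => ?_
  have hn1 : 1 ≤ n := (Nat.ceil_pos.2 hy).trans_le (Finset.mem_Icc.1 hn).1
  have hweight : (n : ℝ) ^ (ω - 1 / k) =
      (n : ℝ) ^ (ω - 1 / (c * k)) * (n : ℝ) ^ ((1 / c - 1) / k) := by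
    rw [← Real.rpow_add (by exact_mod_cast hn1)]
    ring_nf
  rw [pswError_natCast_sub_pred c k α hn1, Complex.real_smul]
  by_cases h₁ : n ∈ NPSpow c k <;> by_cases h₂ : n ∈ Npow k <;>
    simp only [Set.indicator_of_mem, Set.indicator_of_notMem, h₁, h₂, hweight,
      not_false_iff] <;> push_cast <;> ring

theorem norm_pswError_one_le (c : ℝ) (k : ℕ) (α : ℝ) : ‖pswError c k α 1‖ ≤ 1 + 1 / |c| := by
  have h₁ : |(NPSpow c k).indicator (fun _ => (1 : ℝ)) 1| ≤ 1 := by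
    by_cases h : 1 ∈ NPSpow c k <;> simp [h]
  have h₂ : |(Npow k).indicator (fun n => (n : ℝ) ^ ((1 / c - 1) / k)) 1| ≤ 1 := by
    by_cases h : 1 ∈ Npow k <;> simp [h]
  have h := pswError_natCast_sub_pred c k α le_rfl
  rw [Nat.sub_self, Nat.cast_zero, pswError_zero, sub_zero, Nat.cast_one] at h
  rw [h]
  refine (norm_sub_le _ _).trans ?_
  simp only [norm_mul, norm_div, norm_one, norm_eR, Complex.norm_real, Real.norm_eq_abs, mul_one]
  gcongr
  exact mul_le_of_le_one_right (by positivity) h₂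

theorem exists_norm_pswError_le {c : ℝ} {k : ℕ} {P : ℝ} (hP : P ≤ 1 / (c * k))
    (hPSW : PSW c k P) :
    ∃ B > 0, ∀ α ∈ Set.Ico (0 : ℝ) 1, ∀ x : ℝ, 1 ≤ x → ∀ t : ℕ, (t : ℝ) ≤ x →
      ‖pswError c k α t‖ ≤ B * x ^ (1 / (c * k) - P) := by
  obtain ⟨C, hC⟩ := hPSW
  refine ⟨max C 1 + 1 / |c|, by positivity, fun α hα x hx t htx => ?_⟩
  have hxe : 1 ≤ x ^ (1 / (c * k) - P) := Real.one_le_rpow hx (by linarith)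
  rcases lt_or_ge t 2 with ht | ht
  · interval_cases t
    · rw [Nat.cast_zero, pswError_zero, norm_zero]
      positivity
    · rw [Nat.cast_one]
      calc ‖pswError c k α 1‖ ≤ 1 + 1 / |c| := norm_pswError_one_le c k α
        _ ≤ max C 1 + 1 / |c| := by gcongr; exact le_max_right C 1
        _ ≤ (max C 1 + 1 / |c|) * x ^ (1 / (c * k) - P) :=
          le_mul_of_one_le_right (by positivity) hxe
  · calc ‖pswError c k α t‖ ≤ C * (t : ℝ) ^ (1 / (c * k) - P) := hC α hα t (by exact_mod_cast ht)
      _ ≤ max C 1 * x ^ (1 / (c * k) - P) := by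
        gcongr
        exact le_max_left C 1
      _ ≤ (max C 1 + 1 / |c|) * x ^ (1 / (c * k) - P) := by
        gcongr
        exact le_add_of_nonneg_right (by positivity)

theorem stmt13_general (k : ℕ) (c : ℝ)
    (P : ℝ) (hP1 : P ≤ 1 / (c * k)) (hPSW : PSW c k P)
    (ω : ℝ) (C₀ : ℝ) (hC₀ : 1 ≤ C₀) :
    ∃ C > (0:ℝ), ∀ α ∈ Set.Ico (0:ℝ) 1, ∀ x : ℝ, 2 ≤ x →
      ‖(expSumI (NPSpow c k) (fun n => (n : ℝ) ^ (ω - 1 / (c * k))) α (x / C₀) x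
          - (1 / c) * expSumI (Npow k) (fun n => (n : ℝ) ^ (ω - 1 / k)) α (x / C₀) x)‖
        ≤ C * x ^ (ω - P) := by
  obtain ⟨B, hB, hpsw⟩ := exists_norm_pswError_le hP1 hPSW
  set θ := ω - 1 / (c * k)
  refine ⟨4 * C₀ ^ |θ| * B, by positivity, fun α hα x hx => ?_⟩
  have hx0 : 0 < x := by linarith
  have hy : 0 < x / C₀ := by positivity
  rw [expSumI_sub_eq_sum_smul_pswError_sub c k ω α hy x]
  rcases lt_or_ge ⌊x⌋₊ ⌈x / C₀⌉₊ with hempty | hMN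
  · rw [Finset.Icc_eq_empty_of_lt hempty, Finset.sum_empty, norm_zero]
    positivity
  have hweight : ∀ n ∈ Finset.Icc ⌈x / C₀⌉₊ ⌊x⌋₊, |(n : ℝ) ^ θ| ≤ C₀ ^ |θ| * x ^ θ := by
    intro n hn
    rw [Finset.mem_Icc] at hn
    rw [abs_of_nonneg (by positivity)]
    exact rpow_le_rpow_abs_mul_rpow hx0 hC₀ ((Nat.le_ceil _).trans (by exact_mod_cast hn.1))
      ((Nat.cast_le.2 hn.2).trans (Nat.floor_le hx0.le))
  have herror : ∀ n ∈ Finset.Icc (⌈x / C₀⌉₊ - 1) ⌊x⌋₊,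
      ‖pswError c k α n‖ ≤ B * x ^ (1 / (c * k) - P) := fun n hn =>
    hpsw α hα x (by linarith) n
      ((Nat.cast_le.2 (Finset.mem_Icc.1 hn).2).trans (Nat.floor_le hx0.le))
  calc _ ≤ 4 * (C₀ ^ |θ| * x ^ θ) * (B * x ^ (1 / (c * k) - P)) :=
        norm_sum_Icc_smul_sub_le (D := fun n : ℕ => pswError c k α n) hMN
          (monotoneOn_or_antitoneOn_natCast_rpow θ (Nat.ceil_pos.2 hy) _) hweight herror
    _ = 4 * C₀ ^ |θ| * B * x ^ (ω - P) := by
      have hexp : x ^ θ * x ^ (1 / (c * k) - P) = x ^ (ω - P) := by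
        rw [← Real.rpow_add hx0, sub_add_sub_cancel]
      rw [← hexp]
      ring

/-- Dyadic weighted transfer estimate from `N_(c)^k` to `N^k`. -/
theorem stmt13 (k : ℕ) (hk : 2 ≤ k) (c : ℝ) (hc1 : 1 < c) (hcni : ∀ m : ℤ, c ≠ (m : ℝ))
    (P : ℝ) (hP0 : 0 < P) (hP1 : P ≤ 1 / (c * k)) (hPSW : PSW c k P)
    (ω : ℝ) (C₀ : ℝ) (hC₀ : 1 ≤ C₀) :
    ∃ C > (0:ℝ), ∀ α ∈ Set.Ico (0:ℝ) 1, ∀ x : ℝ, 2 ≤ x →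
      ‖(expSumI (NPSpow c k) (fun n => (n : ℝ) ^ (ω - 1 / (c * k))) α (x / C₀) x
          - (1 / c) * expSumI (Npow k) (fun n => (n : ℝ) ^ (ω - 1 / k)) α (x / C₀) x)‖
        ≤ C * x ^ (ω - P) :=
  stmt13_general k c P hP1 hPSW ω C₀ hC₀
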